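/- The precongruence ⪰⊕ preserves typing: if P ⊢ Γ is derivable in the sπ! type system and P ⪰⊕ Q, then Q ⊢ Γ is derivable. -/
import Mathlib


/-- Session types of sπ!. Branching/selection use lists of types (labels are positions). -/
inductive STy : Type where
  | one : STy                     -- 1
  | bot : STy                     -- ⊥
  | tensor : STy → STy → STy      -- A ⊗ B
  | parr : STy → STy → STy        -- A ⅋ B
  | oplus : List STy → STy        -- ⊕{i : A_i}
  | with_ : List STy → STy        -- &{i : A_i}
  | quest : STy → STy             -- ?A
  | bang : STy → STy              -- !A
  | amp : STy → STy               -- &A  (may produce)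
  | opl : STy → STy               -- ⊕A  (may consume)

/-- Duality of session types. -/
def STy.dual : STy → STy
  | .one => .bot
  | .bot => .one
  | .tensor A B => .parr A.dual B.dual
  | .parr A B => .tensor A.dual B.dual
  | .oplus As => .with_ (As.attach.map fun ⟨A, _⟩ => A.dual)
  | .with_ As => .oplus (As.attach.map fun ⟨A, _⟩ => A.dual)
  | .quest A => .bang A.dual
  | .bang A => .quest A.dual
  | .amp A => .opl A.dual
  | .opl A => .amp A.dual
decreasing_by all_goals simp_wf <;> first
  | omega
  | exact Nat.lt_of_lt_of_le (List.sizeOf_lt_of_mem ‹_›) (by omega)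

/-- Processes of sπ!. Names are natural numbers. `res x P Q` is ν x (P ‖ Q);
branching `bra x Ps` offers the labeled choices in the list `Ps` (labels are positions). -/
inductive Proc : Type where
  | nil : Proc                                  -- 0
  | fwd : ℕ → ℕ → Proc                          -- [x ↔ y]
  | par : Proc → Proc → Proc                    -- P ‖ Q
  | res : ℕ → Proc → Proc → Proc                -- ν x (P ‖ Q)
  | choice : Proc → Proc → Proc                 -- P ⊕ Q (non-deterministic choice)
  | send : ℕ → ℕ → Proc → Proc → Proc           -- x̄(y);(P ‖ Q)
  | recv : ℕ → ℕ → Proc → Proc                  -- x(y);P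
  | sel : ℕ → ℕ → Proc → Proc                   -- x.ℓ;P
  | bra : ℕ → List Proc → Proc                  -- x.case{i : P_i}
  | close : ℕ → Proc                            -- x̄.close
  | wait : ℕ → Proc → Proc                      -- x.close;P
  | creq : ℕ → ℕ → Proc → Proc                  -- ?x̄(y);P  (client request)
  | srv : ℕ → ℕ → Proc → Proc                   -- !x(y);P  (server)
  | psome : ℕ → Proc → Proc                     -- x.some;P
  | pnone : ℕ → Proc                            -- x.none
  | gsome : ℕ → List ℕ → Proc → Proc            -- x.some_{w̃};P

/-- ND-contexts: N ::= [·] | N ‖ P | ν x (N ‖ P) | N ⊕ P. -/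
inductive NDCtx : Type where
  | hole : NDCtx
  | par : NDCtx → Proc → NDCtx
  | res : ℕ → NDCtx → Proc → NDCtx
  | choice : NDCtx → Proc → NDCtx

namespace NDCtx

/-- Filling the hole of an ND-context with a process. -/
def fill : NDCtx → Proc → Proc
  | .hole, P => P
  | .par N Q, P => .par (N.fill P) Q
  | .res x N Q, P => .res x (N.fill P) Q
  | .choice N Q, P => .choice (N.fill P) Q

/-- Composition of ND-contexts: replace the hole of `N` by the context `M`. -/
def comp : NDCtx → NDCtx → NDCtx
  | .hole, M => M
  | .par N Q, M => .par (N.comp M) Q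
  | .res x N Q, M => .res x (N.comp M) Q
  | .choice N Q, M => .choice (N.comp M) Q

/-- A D-context is an ND-context that does not use the clause `N ⊕ P`. -/
def IsD : NDCtx → Prop
  | .hole => True
  | .par N _ => N.IsD
  | .res _ N _ => N.IsD
  | .choice _ _ => False

/-- Commitment ⌊N⌋ of an ND-context. -/
def commit : NDCtx → NDCtx
  | .hole => .hole
  | .par N Q => .par N.commit Q
  | .res x N Q => .res x N.commit Q
  | .choice N _ => N.commit

end NDCtx

/-- The precongruence ⪰⊕ on sπ! processes ("has at least as many branches as"). -/
inductive Prec : Proc → Proc → Prop where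
  | refl (P : Proc) : Prec P P
  | choice_left {P₁ P₂ P₁' P₂' : Proc} :
      Prec P₁ P₁' → Prec P₂ P₂' → Prec (.choice P₁ P₂) P₁'
  | choice_right {P₁ P₂ P₁' P₂' : Proc} :
      Prec P₁ P₁' → Prec P₂ P₂' → Prec (.choice P₁ P₂) P₂'
  | par {P P' Q Q' : Proc} :
      Prec P P' → Prec Q Q' → Prec (.par P Q) (.par P' Q')
  | res {P P' Q Q' : Proc} (x : ℕ) :
      Prec P P' → Prec Q Q' → Prec (.res x P Q) (.res x P' Q')
namespace Proc

/-- Substitution of name `y` for free occurrences of name `x`: P{y/x}. -/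
def subst (x y : ℕ) : Proc → Proc
  | .nil => .nil
  | .fwd a b => .fwd (if a = x then y else a) (if b = x then y else b)
  | .par P Q => .par (P.subst x y) (Q.subst x y)
  | .res z P Q => if z = x then .res z P Q else .res z (P.subst x y) (Q.subst x y)
  | .choice P Q => .choice (P.subst x y) (Q.subst x y)
  | .send a b P Q =>
      .send (if a = x then y else a) b (if b = x then P else P.subst x y) (Q.subst x y)
  | .recv a b P => .recv (if a = x then y else a) b (if b = x then P else P.subst x y)
  | .sel a l P => .sel (if a = x then y else a) l (P.subst x y)
  | .bra a Ps => .bra (if a = x then y else a) (Ps.attach.map fun ⟨P, _⟩ => P.subst x y)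
  | .close a => .close (if a = x then y else a)
  | .wait a P => .wait (if a = x then y else a) (P.subst x y)
  | .creq a b P => .creq (if a = x then y else a) b (if b = x then P else P.subst x y)
  | .srv a b P => .srv (if a = x then y else a) b (if b = x then P else P.subst x y)
  | .psome a P => .psome (if a = x then y else a) (P.subst x y)
  | .pnone a => .pnone (if a = x then y else a)
  | .gsome a ws P =>
      .gsome (if a = x then y else a) (ws.map fun w => if w = x then y else w) (P.subst x y)
decreasing_by all_goals simp_wf <;> first
  | omega
  | exact Nat.lt_of_lt_of_le (List.sizeOf_lt_of_mem ‹_›) (by omega)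

/-- Name swapping (a b)·P, applied to all occurrences including binders. -/
def swapN (a b : ℕ) : Proc → Proc
  | .nil => .nil
  | .fwd u v => .fwd (Equiv.swap a b u) (Equiv.swap a b v)
  | .par P Q => .par (P.swapN a b) (Q.swapN a b)
  | .res z P Q => .res (Equiv.swap a b z) (P.swapN a b) (Q.swapN a b)
  | .choice P Q => .choice (P.swapN a b) (Q.swapN a b)
  | .send u v P Q => .send (Equiv.swap a b u) (Equiv.swap a b v) (P.swapN a b) (Q.swapN a b)
  | .recv u v P => .recv (Equiv.swap a b u) (Equiv.swap a b v) (P.swapN a b)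
  | .sel u l P => .sel (Equiv.swap a b u) l (P.swapN a b)
  | .bra u Ps => .bra (Equiv.swap a b u) (Ps.attach.map fun ⟨P, _⟩ => P.swapN a b)
  | .close u => .close (Equiv.swap a b u)
  | .wait u P => .wait (Equiv.swap a b u) (P.swapN a b)
  | .creq u v P => .creq (Equiv.swap a b u) (Equiv.swap a b v) (P.swapN a b)
  | .srv u v P => .srv (Equiv.swap a b u) (Equiv.swap a b v) (P.swapN a b)
  | .psome u P => .psome (Equiv.swap a b u) (P.swapN a b)
  | .pnone u => .pnone (Equiv.swap a b u)
  | .gsome u ws P => .gsome (Equiv.swap a b u) (ws.map (Equiv.swap a b)) (P.swapN a b)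
decreasing_by all_goals simp_wf <;> first
  | omega
  | exact Nat.lt_of_lt_of_le (List.sizeOf_lt_of_mem ‹_›) (by omega)

/-- Free names of a process. -/
def fn : Proc → Finset ℕ
  | .nil => ∅
  | .fwd a b => {a, b}
  | .par P Q => P.fn ∪ Q.fn
  | .res z P Q => (P.fn ∪ Q.fn).erase z
  | .choice P Q => P.fn ∪ Q.fn
  | .send a b P Q => insert a (P.fn.erase b ∪ Q.fn)
  | .recv a b P => insert a (P.fn.erase b)
  | .sel a _ P => insert a P.fn
  | .bra a Ps => insert a ((Ps.attach.map fun ⟨P, _⟩ => P.fn).foldr (· ∪ ·) ∅)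
  | .close a => {a}
  | .wait a P => insert a P.fn
  | .creq a b P => insert a (P.fn.erase b)
  | .srv a b P => insert a (P.fn.erase b)
  | .psome a P => insert a P.fn
  | .pnone a => {a}
  | .gsome a ws P => insert a (ws.toFinset ∪ P.fn)
decreasing_by all_goals simp_wf <;> first
  | omega
  | exact Nat.lt_of_lt_of_le (List.sizeOf_lt_of_mem ‹_›) (by omega)

end Proc

/-- Structural congruence ≡ of sπ!: an equivalence and congruence generated by
α-conversion and the axioms of Figure 1 (bottom). -/
inductive SC : Proc → Proc → Prop where
  -- equivalence
  | refl (P) : SC P P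
  | symm {P Q} : SC P Q → SC Q P
  | trans {P Q R} : SC P Q → SC Q R → SC P R
  -- α-conversion (nominal style: swapping two names that are not free)
  | alpha {P : Proc} {a b : ℕ} : a ∉ P.fn → b ∉ P.fn → SC P (P.swapN a b)
  -- congruence rules
  | par_cong {P P' Q Q'} : SC P P' → SC Q Q' → SC (.par P Q) (.par P' Q')
  | res_cong {P P' Q Q'} (x) : SC P P' → SC Q Q' → SC (.res x P Q) (.res x P' Q')
  | choice_cong {P P' Q Q'} : SC P P' → SC Q Q' → SC (.choice P Q) (.choice P' Q')
  | send_cong {P P' Q Q'} (x y) : SC P P' → SC Q Q' → SC (.send x y P Q) (.send x y P' Q')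
  | recv_cong {P P'} (x y) : SC P P' → SC (.recv x y P) (.recv x y P')
  | sel_cong {P P'} (x l) : SC P P' → SC (.sel x l P) (.sel x l P')
  | bra_cong {Ps Ps' : List Proc} (x) : Ps.length = Ps'.length →
      (∀ i (h : i < Ps.length) (h' : i < Ps'.length), SC (Ps.get ⟨i, h⟩) (Ps'.get ⟨i, h'⟩)) →
      SC (.bra x Ps) (.bra x Ps')
  | wait_cong {P P'} (x) : SC P P' → SC (.wait x P) (.wait x P')
  | creq_cong {P P'} (x y) : SC P P' → SC (.creq x y P) (.creq x y P')
  | srv_cong {P P'} (x y) : SC P P' → SC (.srv x y P) (.srv x y P')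
  | psome_cong {P P'} (x) : SC P P' → SC (.psome x P) (.psome x P')
  | gsome_cong {P P'} (x ws) : SC P P' → SC (.gsome x ws P) (.gsome x ws P')
  -- axioms
  | fwd_comm (x y) : SC (.fwd x y) (.fwd y x)
  | par_nil (P) : SC (.par P .nil) P
  | par_assoc (P Q R) : SC (.par (.par P Q) R) (.par P (.par Q R))
  | par_comm (P Q) : SC (.par P Q) (.par Q P)
  | res_comm (x P Q) : SC (.res x P Q) (.res x Q P)
  | choice_idem (P) : SC (.choice P P) P
  | choice_comm (P Q) : SC (.choice P Q) (.choice Q P)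
  | choice_assoc (P Q R) : SC (.choice (.choice P Q) R) (.choice P (.choice Q R))
  | scope_par {Q : Proc} (x P R) : x ∉ Q.fn →
      SC (.res x (.par P Q) R) (.par (.res x P R) Q)
  | scope_res {Q R : Proc} (x y P) : x ∉ Q.fn → y ∉ R.fn →
      SC (.res x (.res y P Q) R) (.res y (.res x P R) Q)
  | srv_gc {Q : Proc} (x y P) : x ∉ Q.fn → SC (.res x (.srv x y P) Q) Q

/-- Typing contexts: finite lists of type assignments x : A (exchange is a rule). -/
abbrev TCtx := List (ℕ × STy)

/-- All assignments in Γ are of shape &A. -/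
def AllAmp (Γ : TCtx) : Prop := ∀ p ∈ Γ, ∃ A, p.2 = STy.amp A

/-- All assignments in Γ are of shape ?A. -/
def AllQuest (Γ : TCtx) : Prop := ∀ p ∈ Γ, ∃ A, p.2 = STy.quest A

/-- The session type system of sπ! (Figure 4): judgments P ⊢ Γ. -/
inductive Typed : Proc → TCtx → Prop where
  | exch {P Γ Δ} : Γ.Perm Δ → Typed P Γ → Typed P Δ
  | cut {P Q : Proc} {Γ Δ : TCtx} {x A} :
      Typed P (Γ ++ [(x, A)]) → Typed Q (Δ ++ [(x, A.dual)]) →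
      Typed (.res x P Q) (Γ ++ Δ)
  | mix {P Q Γ Δ} : Typed P Γ → Typed Q Δ → Typed (.par P Q) (Γ ++ Δ)
  | nd {P Q Γ} : Typed P Γ → Typed Q Γ → Typed (.choice P Q) Γ
  | empty : Typed .nil []
  | id {x y A} : Typed (.fwd x y) [(x, A), (y, A.dual)]
  | one {x} : Typed (.close x) [(x, .one)]
  | bot {P Γ x} : Typed P Γ → Typed (.wait x P) (Γ ++ [(x, .bot)])
  | tensor {P Q Γ Δ x y A B} :
      Typed P (Γ ++ [(y, A)]) → Typed Q (Δ ++ [(x, B)]) →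
      Typed (.send x y P Q) (Γ ++ Δ ++ [(x, .tensor A B)])
  | parr {P Γ x y A B} :
      Typed P (Γ ++ [(y, A), (x, B)]) →
      Typed (.recv x y P) (Γ ++ [(x, .parr A B)])
  | oplus {P Γ x j} {As : List STy} (h : j < As.length) :
      Typed P (Γ ++ [(x, As.get ⟨j, h⟩)]) →
      Typed (.sel x j P) (Γ ++ [(x, .oplus As)])
  | with_ {Ps : List Proc} {As : List STy} {Γ x} :
      Ps.length = As.length →
      (∀ i (h : i < Ps.length) (h' : i < As.length),
        Typed (Ps.get ⟨i, h⟩) (Γ ++ [(x, As.get ⟨i, h'⟩)])) →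
      Typed (.bra x Ps) (Γ ++ [(x, .with_ As)])
  | amp_some {P Γ x A} :
      Typed P (Γ ++ [(x, A)]) → Typed (.psome x P) (Γ ++ [(x, .amp A)])
  | amp_none {x A} : Typed (.pnone x) [(x, .amp A)]
  | opl_some {P Γ x A} :
      AllAmp Γ →
      Typed P (Γ ++ [(x, A)]) →
      Typed (.gsome x (Γ.map Prod.fst) P) (Γ ++ [(x, .opl A)])
  | quest {P Γ x y A} :
      Typed P (Γ ++ [(y, A)]) → Typed (.creq x y P) (Γ ++ [(x, .quest A)])
  | bang {P Γ x y A} :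
      AllQuest Γ →
      Typed P (Γ ++ [(y, A)]) → Typed (.srv x y P) (Γ ++ [(x, .bang A)])
  | weaken {P Γ x A} : Typed P Γ → Typed P (Γ ++ [(x, .quest A)])
  | contract {P Γ x x' A} :
      Typed P (Γ ++ [(x, .quest A), (x', .quest A)]) →
      Typed (P.subst x' x) (Γ ++ [(x, .quest A)])

/-- `nones ws` is the parallel composition w₁.none ‖ … ‖ wₙ.none. -/
def nones : List ℕ → Proc
  | [] => .nil
  | [w] => .pnone w
  | w :: ws => .par (.pnone w) (nones ws)

open NDCtx in
/-- The eager reduction semantics of sπ! (Figure 2). -/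
inductive Red : Proc → Proc → Prop where
  | id {N : NDCtx} {Q : Proc} {x y : ℕ} :
      Red (.res x (N.fill (.fwd x y)) Q) (N.commit.fill (Q.subst x y))
  | close_wait {N N' : NDCtx} {Q : Proc} {x : ℕ} :
      Red (.res x (N.fill (.close x)) (N'.fill (.wait x Q)))
          (.par (N.commit.fill .nil) (N'.commit.fill Q))
  | tensor_parr {N N' : NDCtx} {P Q R : Proc} {x y z : ℕ} :
      Red (.res x (N.fill (.send x y P Q)) (N'.fill (.recv x z R)))
          (N.commit.fill (.res x Q (.res y P (N'.commit.fill (R.subst z y)))))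
  | sel_bra {N N' : NDCtx} {P : Proc} {Ps : List Proc} {x k : ℕ} (h : k < Ps.length) :
      Red (.res x (N.fill (.sel x k P)) (N'.fill (.bra x Ps)))
          (.res x (N.commit.fill P) (N'.commit.fill (Ps.get ⟨k, h⟩)))
  | creq_srv {N N' : NDCtx} {P Q : Proc} {x y z : ℕ} :
      Red (.res x (N.fill (.creq x y P)) (N'.fill (.srv x z Q)))
          (N'.commit.fill
            (.res x (.res y (N.commit.fill P) (Q.subst z y)) (.srv x z Q)))
  | some_conf {N N' : NDCtx} {P Q : Proc} {x : ℕ} {ws : List ℕ} :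
      Red (.res x (N.fill (.psome x P)) (N'.fill (.gsome x ws Q)))
          (.res x (N.commit.fill P) (N'.commit.fill Q))
  | none_fail {N N' : NDCtx} {Q : Proc} {x : ℕ} {ws : List ℕ} :
      Red (.res x (N.fill (.pnone x)) (N'.fill (.gsome x ws Q)))
          (.par (N.commit.fill .nil) (N'.commit.fill (nones ws)))
  | cong {P P' Q Q'} : SC P P' → Red P' Q' → SC Q' Q → Red P Q
  | res {P P' Q x} : Red P P' → Red (.res x P Q) (.res x P' Q)
  | par {P P' Q} : Red P P' → Red (.par P Q) (.par P' Q)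
  | choice {P P' Q} : Red P P' → Red (.choice P Q) (.choice P' Q)

theorem prec_of_atom {R Q : Proc} (h : Prec R Q)
    (h1 : ∀ A B, R ≠ .choice A B) (h2 : ∀ A B, R ≠ .par A B)
    (h3 : ∀ x A B, R ≠ .res x A B) : Q = R := by
  cases h with
  | refl => rfl
  | choice_left hp hq => exact absurd rfl (h1 _ _)
  | choice_right hp hq => exact absurd rfl (h1 _ _)
  | par hp hq => exact absurd rfl (h2 _ _)
  | res x hp hq => exact absurd rfl (h3 _ _ _)

theorem prec_subst_inv {a b : ℕ} : ∀ (P : Proc) {Q : Proc}, Prec (P.subst a b) Q →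
    ∃ Q₀, Prec P Q₀ ∧ Q = Q₀.subst a b := by
  intro P
  match P with
  | .choice P₁ P₂ =>
      intro Q h
      rw [show (Proc.choice P₁ P₂).subst a b = .choice (P₁.subst a b) (P₂.subst a b) from by
        simp [Proc.subst]] at h
      cases h with
      | refl => exact ⟨.choice P₁ P₂, Prec.refl _, by simp [Proc.subst]⟩
      | choice_left hp hq =>
          obtain ⟨Q₀, h1, h2⟩ := prec_subst_inv P₁ hp
          exact ⟨Q₀, Prec.choice_left h1 (Prec.refl P₂), h2⟩
      | choice_right hp hq =>
          obtain ⟨Q₀, h1, h2⟩ := prec_subst_inv P₂ hq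
          exact ⟨Q₀, Prec.choice_right (Prec.refl P₁) h1, h2⟩
  | .par P₁ P₂ =>
      intro Q h
      rw [show (Proc.par P₁ P₂).subst a b = .par (P₁.subst a b) (P₂.subst a b) from by
        simp [Proc.subst]] at h
      cases h with
      | refl => exact ⟨.par P₁ P₂, Prec.refl _, by simp [Proc.subst]⟩
      | par hp hq =>
          obtain ⟨Q₁, h1, h2⟩ := prec_subst_inv P₁ hp
          obtain ⟨Q₂, h3, h4⟩ := prec_subst_inv P₂ hq
          exact ⟨.par Q₁ Q₂, Prec.par h1 h3, by simp [Proc.subst, h2, h4]⟩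
  | .res z P₁ P₂ =>
      intro Q h
      by_cases hz : z = a
      · rw [show (Proc.res z P₁ P₂).subst a b = .res z P₁ P₂ from by
          simp [Proc.subst, hz]] at h
        cases h with
        | refl => exact ⟨.res z P₁ P₂, Prec.refl _, by simp [Proc.subst, hz]⟩
        | res x hp hq =>
            exact ⟨.res z _ _, Prec.res z hp hq, by simp [Proc.subst, hz]⟩
      · rw [show (Proc.res z P₁ P₂).subst a b = .res z (P₁.subst a b) (P₂.subst a b) from by
          simp [Proc.subst, hz]] at h
        cases h with
        | refl => exact ⟨.res z P₁ P₂, Prec.refl _, by simp [Proc.subst, hz]⟩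
        | res x hp hq =>
            obtain ⟨Q₁, h1, h2⟩ := prec_subst_inv P₁ hp
            obtain ⟨Q₂, h3, h4⟩ := prec_subst_inv P₂ hq
            exact ⟨.res z Q₁ Q₂, Prec.res z h1 h3, by simp [Proc.subst, hz, h2, h4]⟩
  | .nil => exact fun Q h => ⟨_, Prec.refl _,
      prec_of_atom h (by simp [Proc.subst]) (by simp [Proc.subst]) (by simp [Proc.subst])⟩
  | .fwd u v => exact fun Q h => ⟨_, Prec.refl _,
      prec_of_atom h (by simp [Proc.subst]) (by simp [Proc.subst]) (by simp [Proc.subst])⟩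
  | .send u v R S => exact fun Q h => ⟨_, Prec.refl _,
      prec_of_atom h (by simp [Proc.subst]) (by simp [Proc.subst]) (by simp [Proc.subst])⟩
  | .recv u v R => exact fun Q h => ⟨_, Prec.refl _,
      prec_of_atom h (by simp [Proc.subst]) (by simp [Proc.subst]) (by simp [Proc.subst])⟩
  | .sel u l R => exact fun Q h => ⟨_, Prec.refl _,
      prec_of_atom h (by simp [Proc.subst]) (by simp [Proc.subst]) (by simp [Proc.subst])⟩
  | .bra u Rs => exact fun Q h => ⟨_, Prec.refl _,
      prec_of_atom h (by simp [Proc.subst]) (by simp [Proc.subst]) (by simp [Proc.subst])⟩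
  | .close u => exact fun Q h => ⟨_, Prec.refl _,
      prec_of_atom h (by simp [Proc.subst]) (by simp [Proc.subst]) (by simp [Proc.subst])⟩
  | .wait u R => exact fun Q h => ⟨_, Prec.refl _,
      prec_of_atom h (by simp [Proc.subst]) (by simp [Proc.subst]) (by simp [Proc.subst])⟩
  | .creq u v R => exact fun Q h => ⟨_, Prec.refl _,
      prec_of_atom h (by simp [Proc.subst]) (by simp [Proc.subst]) (by simp [Proc.subst])⟩
  | .srv u v R => exact fun Q h => ⟨_, Prec.refl _,
      prec_of_atom h (by simp [Proc.subst]) (by simp [Proc.subst]) (by simp [Proc.subst])⟩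
  | .psome u R => exact fun Q h => ⟨_, Prec.refl _,
      prec_of_atom h (by simp [Proc.subst]) (by simp [Proc.subst]) (by simp [Proc.subst])⟩
  | .pnone u => exact fun Q h => ⟨_, Prec.refl _,
      prec_of_atom h (by simp [Proc.subst]) (by simp [Proc.subst]) (by simp [Proc.subst])⟩
  | .gsome u ws R => exact fun Q h => ⟨_, Prec.refl _,
      prec_of_atom h (by simp [Proc.subst]) (by simp [Proc.subst]) (by simp [Proc.subst])⟩

/-- the precongruence ⪰⊕ preserves typing. -/
theorem prec_preserves_typing {P Q : Proc} {Γ : TCtx} (hT : Typed P Γ) (hP : Prec P Q) :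
    Typed Q Γ := by
  induction hT generalizing Q with
  | exch hperm _ ih => exact Typed.exch hperm (ih hP)
  | cut h1 h2 ih1 ih2 =>
      cases hP with
      | refl => exact Typed.cut (ih1 (Prec.refl _)) (ih2 (Prec.refl _))
      | res x hp hq => exact Typed.cut (ih1 hp) (ih2 hq)
  | mix h1 h2 ih1 ih2 =>
      cases hP with
      | refl => exact Typed.mix (ih1 (Prec.refl _)) (ih2 (Prec.refl _))
      | par hp hq => exact Typed.mix (ih1 hp) (ih2 hq)
  | nd h1 h2 ih1 ih2 =>
      cases hP with
      | refl => exact Typed.nd (ih1 (Prec.refl _)) (ih2 (Prec.refl _))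
      | choice_left hp _ => exact ih1 hp
      | choice_right _ hq => exact ih2 hq
  | weaken h ih => exact Typed.weaken (ih hP)
  | contract h ih =>
      obtain ⟨Q₀, hp, rfl⟩ := prec_subst_inv _ hP
      exact Typed.contract (ih hp)
  | empty => cases hP; exact Typed.empty
  | id => cases hP; exact Typed.id
  | one => cases hP; exact Typed.one
  | bot h ih => cases hP; exact Typed.bot (ih (Prec.refl _))
  | tensor h1 h2 ih1 ih2 =>
      cases hP; exact Typed.tensor (ih1 (Prec.refl _)) (ih2 (Prec.refl _))
  | parr h ih => cases hP; exact Typed.parr (ih (Prec.refl _))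
  | oplus hj h ih => cases hP; exact Typed.oplus hj (ih (Prec.refl _))
  | with_ hlen h ih => cases hP; exact Typed.with_ hlen h
  | amp_some h ih => cases hP; exact Typed.amp_some (ih (Prec.refl _))
  | amp_none => cases hP; exact Typed.amp_none
  | opl_some hamp h ih => cases hP; exact Typed.opl_some hamp (ih (Prec.refl _))
  | quest h ih => cases hP; exact Typed.quest (ih (Prec.refl _))
  | bang hq h ih => cases hP; exact Typed.bang hq (ih (Prec.refl _))
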